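/- Validity of the ◇-axiom: for every recursive causal Kripke setting (K,t), every world w, every intervention Y←y (possibly empty) with Y ⊆ V × W, and every formula φ of the modal causal language L_M, (K,t,w) ⊩ [Y←y]◇φ if and only if (K,t,w) ⊩ ◇[Y←y]φ. -/

import Mathlib

open Classical

noncomputable section

/-- A causal Kripke model `K = (S, W, Rel, F)`: the signature `S` consists of the disjoint
finite sets `Exo` of exogenous and `Endo` of endogenous variables together with a finite
nonempty range `range Γ w` of possible values for each variable `Γ` at each world `w`;
`World` is a finite set of possible worlds, `Rel` is the accessibility relation, and `eqs`
assigns to each endogenous variable `X` and world `w` a structural equation computing the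
value of `(X,w)` from the values of all the other variables (it does not depend on the
coordinate `(X,w)` itself, and its value lies in the range of `(X,w)`). -/
structure CKM where
  Exo : Type
  Endo : Type
  World : Type
  Val : Type
  exoFin : Fintype Exo
  endoFin : Fintype Endo
  worldFin : Fintype World
  Rel : World → World → Prop
  range : (Exo ⊕ Endo) → World → Finset Val
  range_nonempty : ∀ Γ w, (range Γ w).Nonempty
  eqs : Endo → World → (((Exo ⊕ Endo) × World) → Val) → Val
  eqs_mem : ∀ X w g, eqs X w g ∈ range (Sum.inr X) w
  eqs_indep : ∀ X w g g',
    (∀ p, p ≠ (Sum.inr X, w) → g p = g' p) → eqs X w g = eqs X w g'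

namespace CKM

/-- A context assigns to every exogenous variable at every world a value in its range. -/
def ValidContext (K : CKM) (t : K.Exo → K.World → K.Val) : Prop :=
  ∀ U w, t U w ∈ K.range (Sum.inl U) w

/-- `v` is a solution of the causal Kripke setting `(K, t)`: it agrees with the context `t`
on all exogenous variables and satisfies all structural equations. -/
def Solves (K : CKM) (t : K.Exo → K.World → K.Val)
    (v : ((K.Exo ⊕ K.Endo) × K.World) → K.Val) : Prop :=
  (∀ U w, v (Sum.inl U, w) = t U w) ∧ ∀ X w, v (Sum.inr X, w) = K.eqs X w v

/-- The variable `p` influences the (endogenous) variable `q` (i.e. `q` directly causally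
depends on `p`): some change in the value of `p`, keeping all other variables fixed
(within their ranges), changes the value of the structural equation of `q`. -/
def Influences (K : CKM) (p q : (K.Exo ⊕ K.Endo) × K.World) : Prop :=
  ∃ X w, q = (Sum.inr X, w) ∧
    ∃ g g', (∀ r, g r ∈ K.range r.1 r.2) ∧ (∀ r, g' r ∈ K.range r.1 r.2) ∧
      (∀ r, r ≠ p → g r = g' r) ∧ K.eqs X w g ≠ K.eqs X w g'

/-- A causal Kripke model is recursive if it contains no cyclic dependencies. -/
def Recursive (K : CKM) : Prop :=
  ∀ p, ¬ Relation.TransGen K.Influences p p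

/-- The causal Kripke model obtained from `K` by the intervention setting the variables in
`dom` to the values prescribed by `val`. -/
def doInt (K : CKM) (dom : Finset (K.Endo × K.World)) (val : K.Endo × K.World → K.Val) :
    CKM :=
  { K with
    eqs := fun X w g =>
      if (X, w) ∈ dom ∧ val (X, w) ∈ K.range (Sum.inr X) w then val (X, w)
      else K.eqs X w g
    eqs_mem := by
      intro X w g
      by_cases h : (X, w) ∈ dom ∧ val (X, w) ∈ K.range (Sum.inr X) w
      · simp only [if_pos h]; exact h.2
      · simp only [if_neg h]; exact K.eqs_mem X w g
    eqs_indep := by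
      intro X w g g' hgg'
      by_cases h : (X, w) ∈ dom ∧ val (X, w) ∈ K.range (Sum.inr X) w
      · simp only [if_pos h]
      · simp only [if_neg h]; exact K.eqs_indep X w g g' hgg' }

end CKM

/-- Events (modal-Boolean combinations of primitive events): primitive events `X = x` and
`(X,w) = x`, negation, conjunction and the modal operator `□`. -/
inductive Event (E W V : Type) : Type
  | eq : E → V → Event E W V
  | eqAt : E → W → V → Event E W V
  | neg : Event E W V → Event E W V
  | conj : Event E W V → Event E W V → Event E W V
  | box : Event E W V → Event E W V

namespace CKM

/-- Satisfaction of an event at a world of `K`, relative to a solution `v` of the setting. -/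
def SatE (K : CKM) (v : ((K.Exo ⊕ K.Endo) × K.World) → K.Val) :
    K.World → Event K.Endo K.World K.Val → Prop
  | w, .eq X x => v (Sum.inr X, w) = x
  | _, .eqAt X w' x => v (Sum.inr X, w') = x
  | w, .neg α => ¬ SatE K v w α
  | w, .conj α β => SatE K v w α ∧ SatE K v w β
  | w, .box α => ∀ w', K.Rel w w' → SatE K v w' α

/-- `(K,t,w) ⊩ [dom ← val] α` : the event `α` holds at `w` in the model obtained from the
intervention `dom ← val`, in the context `t`. -/
def SatI (K : CKM) (t : K.Exo → K.World → K.Val) (dom : Finset (K.Endo × K.World))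
    (val : K.Endo × K.World → K.Val) (w : K.World) (α : Event K.Endo K.World K.Val) :
    Prop :=
  ∀ v, (K.doInt dom val).Solves t v → (K.doInt dom val).SatE v w α

/-- AC1 : `α` actually holds at `w`, and each conjunct `(X_i, w_j) = y_ij` of `Y = y`
actually holds. -/
def AC1 (K : CKM) (t : K.Exo → K.World → K.Val) (w : K.World)
    (Y : Finset (K.Endo × K.World)) (y : K.Endo × K.World → K.Val)
    (α : Event K.Endo K.World K.Val) : Prop :=
  ∀ v, K.Solves t v → K.SatE v w α ∧ ∀ p ∈ Y, v (Sum.inr p.1, p.2) = y p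

/-- AC2a together with AC2bᵒ (they share the partition `Z`, `N` and the setting `n`):
there is a partition of the endogenous variables into `Z ⊇ Y` and `N` and settings `y'`
of `Y` and `n` of `N` such that `(K,t,w) ⊩ [Y ← y', N ← n] ¬α`, and, where `z*` are the
actual values of the variables of `Z`, for every subset `Z'` of `Z \ Y`,
`(K,t,w) ⊩ [Y ← y, N ← n, Z' ← z'*] α`. -/
def AC2o (K : CKM) (t : K.Exo → K.World → K.Val) (w : K.World)
    (Y : Finset (K.Endo × K.World)) (y : K.Endo × K.World → K.Val)
    (α : Event K.Endo K.World K.Val) : Prop :=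
  ∃ Z N : Finset (K.Endo × K.World), ∃ y' n : K.Endo × K.World → K.Val,
    Y ⊆ Z ∧ Disjoint Z N ∧ (∀ p : K.Endo × K.World, p ∈ Z ∨ p ∈ N) ∧
    (∀ p ∈ Y, y' p ∈ K.range (Sum.inr p.1) p.2) ∧
    (∀ p ∈ N, n p ∈ K.range (Sum.inr p.1) p.2) ∧
    K.SatI t (Y ∪ N) (fun p => if p ∈ Y then y' p else n p) w (.neg α) ∧
    ∀ v, K.Solves t v → ∀ Z' ⊆ Z \ Y,
      K.SatI t (Y ∪ N ∪ Z')
        (fun p => if p ∈ Y then y p else if p ∈ N then n p else v (Sum.inr p.1, p.2)) w α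

/-- AC2a together with AC2bᵘ (updated definition): as in `AC2o`, but moreover the
restoration of the actual values `z'*` must keep `α` true for every subset `N'` of `N`. -/
def AC2u (K : CKM) (t : K.Exo → K.World → K.Val) (w : K.World)
    (Y : Finset (K.Endo × K.World)) (y : K.Endo × K.World → K.Val)
    (α : Event K.Endo K.World K.Val) : Prop :=
  ∃ Z N : Finset (K.Endo × K.World), ∃ y' n : K.Endo × K.World → K.Val,
    Y ⊆ Z ∧ Disjoint Z N ∧ (∀ p : K.Endo × K.World, p ∈ Z ∨ p ∈ N) ∧
    (∀ p ∈ Y, y' p ∈ K.range (Sum.inr p.1) p.2) ∧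
    (∀ p ∈ N, n p ∈ K.range (Sum.inr p.1) p.2) ∧
    K.SatI t (Y ∪ N) (fun p => if p ∈ Y then y' p else n p) w (.neg α) ∧
    ∀ v, K.Solves t v → ∀ Z' ⊆ Z \ Y, ∀ N' ⊆ N,
      K.SatI t (Y ∪ N' ∪ Z')
        (fun p => if p ∈ Y then y p else if p ∈ N' then n p else v (Sum.inr p.1, p.2)) w α

/-- AC2aᵐ (modified definition): there are a set `N` of endogenous variables and a setting
`y'` of the variables in `Y` such that, where `n*` are the actual values of the variables
in `N`, `(K,t,w) ⊩ [Y ← y', N ← n*] ¬α`. -/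
def AC2m (K : CKM) (t : K.Exo → K.World → K.Val) (w : K.World)
    (Y : Finset (K.Endo × K.World)) (y : K.Endo × K.World → K.Val)
    (α : Event K.Endo K.World K.Val) : Prop :=
  ∃ N : Finset (K.Endo × K.World), ∃ y' : K.Endo × K.World → K.Val,
    (∀ p ∈ Y, y' p ∈ K.range (Sum.inr p.1) p.2) ∧
    ∀ v, K.Solves t v →
      K.SatI t (Y ∪ N)
        (fun p => if p ∈ Y then y' p else v (Sum.inr p.1, p.2)) w (.neg α)

/-- `Y = y` is an actual cause of `α` in `(K,t)` at `w` by the ORIGINAL HP definition. -/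
def IsCauseO (K : CKM) (t : K.Exo → K.World → K.Val) (w : K.World)
    (Y : Finset (K.Endo × K.World)) (y : K.Endo × K.World → K.Val)
    (α : Event K.Endo K.World K.Val) : Prop :=
  K.AC1 t w Y y α ∧ K.AC2o t w Y y α ∧
    ∀ Y' ⊂ Y, ∀ y'' : K.Endo × K.World → K.Val,
      ¬ (K.AC1 t w Y' y'' α ∧ K.AC2o t w Y' y'' α)

/-- `Y = y` is an actual cause of `α` in `(K,t)` at `w` by the UPDATED HP definition. -/
def IsCauseU (K : CKM) (t : K.Exo → K.World → K.Val) (w : K.World)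
    (Y : Finset (K.Endo × K.World)) (y : K.Endo × K.World → K.Val)
    (α : Event K.Endo K.World K.Val) : Prop :=
  K.AC1 t w Y y α ∧ K.AC2u t w Y y α ∧
    ∀ Y' ⊂ Y, ∀ y'' : K.Endo × K.World → K.Val,
      ¬ (K.AC1 t w Y' y'' α ∧ K.AC2u t w Y' y'' α)

/-- `Y = y` is an actual cause of `α` in `(K,t)` at `w` by the MODIFIED HP definition. -/
def IsCauseM (K : CKM) (t : K.Exo → K.World → K.Val) (w : K.World)
    (Y : Finset (K.Endo × K.World)) (y : K.Endo × K.World → K.Val)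
    (α : Event K.Endo K.World K.Val) : Prop :=
  K.AC1 t w Y y α ∧ K.AC2m t w Y y α ∧
    ∀ Y' ⊂ Y, ∀ y'' : K.Endo × K.World → K.Val,
      ¬ (K.AC1 t w Y' y'' α ∧ K.AC2m t w Y' y'' α)

/-- `(X,w) = x` is part of a cause of `α` in `(K,t)` at `w'` by the original HP
definition: it is a conjunct of some actual cause `Y = y` of `α` at `w'`. -/
def PartOfCauseO (K : CKM) (t : K.Exo → K.World → K.Val) (w' : K.World)
    (X : K.Endo) (w : K.World) (x : K.Val) (α : Event K.Endo K.World K.Val) : Prop :=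
  ∃ Y y, K.IsCauseO t w' Y y α ∧ (X, w) ∈ Y ∧ y (X, w) = x

/-- `(X,w) = x` is part of a cause of `α` in `(K,t)` at `w'` by the updated HP
definition. -/
def PartOfCauseU (K : CKM) (t : K.Exo → K.World → K.Val) (w' : K.World)
    (X : K.Endo) (w : K.World) (x : K.Val) (α : Event K.Endo K.World K.Val) : Prop :=
  ∃ Y y, K.IsCauseU t w' Y y α ∧ (X, w) ∈ Y ∧ y (X, w) = x

/-- `(X,w) = x` is part of a cause of `α` in `(K,t)` at `w'` by the modified HP
definition. -/
def PartOfCauseM (K : CKM) (t : K.Exo → K.World → K.Val) (w' : K.World)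
    (X : K.Endo) (w : K.World) (x : K.Val) (α : Event K.Endo K.World K.Val) : Prop :=
  ∃ Y y, K.IsCauseM t w' Y y α ∧ (X, w) ∈ Y ∧ y (X, w) = x

end CKM

/-- Formulas of the modal causal language `L_M`: primitive events `X = x` and `(X,w) = x`,
negation, conjunction, the modal operator `□`, and interventions `[Y ← y] α` applied to
(modal-Boolean) events `α`. -/
inductive Formula (E W V : Type) : Type
  | eq : E → V → Formula E W V
  | eqAt : E → W → V → Formula E W V
  | neg : Formula E W V → Formula E W V
  | conj : Formula E W V → Formula E W V → Formula E W V
  | box : Formula E W V → Formula E W V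
  | interv : Finset (E × W) → ((E × W) → V) → Event E W V → Formula E W V

/-- The possibility operator `◇ = ¬□¬` on events. -/
def Event.dia {E W V : Type} (α : Event E W V) : Event E W V := .neg (.box (.neg α))

/-- The possibility operator `◇ = ¬□¬` on formulas. -/
def Formula.dia {E W V : Type} (φ : Formula E W V) : Formula E W V := .neg (.box (.neg φ))

namespace CKM

/-- Satisfaction of a formula of `L_M` at a world of `K`, relative to a solution `v` of the
causal Kripke setting `(K,t)`. -/
def SatF (K : CKM) (t : K.Exo → K.World → K.Val)
    (v : ((K.Exo ⊕ K.Endo) × K.World) → K.Val) :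
    K.World → Formula K.Endo K.World K.Val → Prop
  | w, .eq X x => v (Sum.inr X, w) = x
  | _, .eqAt X w' x => v (Sum.inr X, w') = x
  | w, .neg φ => ¬ SatF K t v w φ
  | w, .conj φ ψ => SatF K t v w φ ∧ SatF K t v w ψ
  | w, .box φ => ∀ w', K.Rel w w' → SatF K t v w' φ
  | w, .interv dom val α => K.SatI t dom val w α

/-- `(K,t,w) ⊩ φ` : satisfaction of a formula of `L_M` at the world `w` of the causal
Kripke setting `(K,t)`. -/
def Sat (K : CKM) (t : K.Exo → K.World → K.Val) (w : K.World)
    (φ : Formula K.Endo K.World K.Val) : Prop :=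
  ∀ v, K.Solves t v → K.SatF t v w φ

end CKM

/-! In a recursive setting the intervened model `K_{Y←y}` has exactly one solution, built by
well-founded recursion along the influence relation. Hence `[Y←y]` merely evaluates its
argument at that solution, and this evaluation commutes with the existential quantifier over
accessible worlds hidden in `◇`. -/

namespace CKM

attribute [local instance] CKM.exoFin CKM.endoFin CKM.worldFin

variable {K : CKM} {t : K.Exo → K.World → K.Val}

theorem eqs_update_of_not_influences {X : K.Endo} {w : K.World}
    {a : (K.Exo ⊕ K.Endo) × K.World} (ha : ¬ K.Influences a (Sum.inr X, w))
    {g : ((K.Exo ⊕ K.Endo) × K.World) → K.Val} (hg : ∀ r, g r ∈ K.range r.1 r.2)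
    {x : K.Val} (hx : x ∈ K.range a.1 a.2) :
    K.eqs X w (Function.update g a x) = K.eqs X w g := by
  by_contra hne
  refine ha ⟨X, w, rfl, _, g, fun r => ?_, hg, fun r hr => Function.update_of_ne hr x g, hne⟩
  rcases eq_or_ne r a with rfl | hr
  · simpa using hx
  · simpa [hr] using hg r

theorem eqs_congr (X : K.Endo) (w : K.World) {g g' : ((K.Exo ⊕ K.Endo) × K.World) → K.Val}
    (hg : ∀ r, g r ∈ K.range r.1 r.2) (hg' : ∀ r, g' r ∈ K.range r.1 r.2)
    (h : ∀ r, K.Influences r (Sum.inr X, w) → g r = g' r) :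
    K.eqs X w g = K.eqs X w g' := by
  suffices ∀ S : Finset _, K.eqs X w (S.piecewise g' g) = K.eqs X w g by
    simpa using (this Finset.univ).symm
  intro S
  induction S using Finset.induction_on with
  | empty => simp
  | insert a S haS ih =>
    have hS : ∀ r, S.piecewise g' g r ∈ K.range r.1 r.2 := fun r =>
      S.piecewise_cases g' g (· ∈ K.range r.1 r.2) (hg' r) (hg r)
    rw [Finset.piecewise_insert, ← ih]
    by_cases hinf : K.Influences a (Sum.inr X, w)
    · rw [← h a hinf, ← Finset.piecewise_eq_of_notMem S g' g haS, Function.update_eq_self]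
    · exact eqs_update_of_not_influences hinf hS (hg' a)

theorem Solves.mem_range (ht : K.ValidContext t) {v : ((K.Exo ⊕ K.Endo) × K.World) → K.Val}
    (hv : K.Solves t v) (p : (K.Exo ⊕ K.Endo) × K.World) : v p ∈ K.range p.1 p.2 := by
  obtain ⟨U | X, w⟩ := p
  · rw [hv.1 U w]; exact ht U w
  · rw [hv.2 X w]; exact K.eqs_mem X w v

theorem Recursive.wellFounded_influences (hK : K.Recursive) : WellFounded K.Influences :=
  have : Std.Irrefl (Relation.TransGen K.Influences) := ⟨hK⟩
  Subrelation.wf Relation.TransGen.single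
    (Finite.wellFounded_of_trans_of_irrefl (Relation.TransGen K.Influences))

/-- Values of non-influencing arguments are irrelevant (`eqs_congr`), so they are filled in
with arbitrary elements of the ranges. -/
def solution (t : K.Exo → K.World → K.Val) (hwf : WellFounded K.Influences) :
    ((K.Exo ⊕ K.Endo) × K.World) → K.Val :=
  hwf.fix fun p ih => match p, ih with
    | (Sum.inl U, w), _ => t U w
    | (Sum.inr X, w), ih => K.eqs X w fun q =>
        if h : K.Influences q (Sum.inr X, w) then ih q h else (K.range_nonempty q.1 q.2).choose

theorem solution_inl (hwf : WellFounded K.Influences) (U : K.Exo) (w : K.World) :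
    K.solution t hwf (Sum.inl U, w) = t U w := by
  rw [solution, WellFounded.fix_eq]

theorem solution_inr (hwf : WellFounded K.Influences) (X : K.Endo) (w : K.World) :
    K.solution t hwf (Sum.inr X, w) = K.eqs X w fun q =>
      if K.Influences q (Sum.inr X, w) then K.solution t hwf q
      else (K.range_nonempty q.1 q.2).choose := by
  rw [solution, WellFounded.fix_eq]
  rfl

theorem solution_mem_range (ht : K.ValidContext t) (hwf : WellFounded K.Influences)
    (p : (K.Exo ⊕ K.Endo) × K.World) : K.solution t hwf p ∈ K.range p.1 p.2 := by
  obtain ⟨U | X, w⟩ := p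
  · rw [solution_inl]; exact ht U w
  · rw [solution_inr]; exact K.eqs_mem X w _

theorem solves_solution (ht : K.ValidContext t) (hwf : WellFounded K.Influences) :
    K.Solves t (K.solution t hwf) := by
  refine ⟨solution_inl hwf, fun X w => ?_⟩
  rw [solution_inr]
  refine eqs_congr X w (fun r => ?_) (solution_mem_range ht hwf) fun r hr => if_pos hr
  split
  · exact solution_mem_range ht hwf r
  · exact (K.range_nonempty r.1 r.2).choose_spec

theorem Solves.eq_of_wellFounded (ht : K.ValidContext t) (hwf : WellFounded K.Influences)
    {v v' : ((K.Exo ⊕ K.Endo) × K.World) → K.Val} (hv : K.Solves t v) (hv' : K.Solves t v') :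
    v = v' := by
  funext p
  induction p using hwf.induction with
  | _ p ih =>
    obtain ⟨U | X, w⟩ := p
    · rw [hv.1, hv'.1]
    · rw [hv.2, hv'.2]
      exact eqs_congr X w (hv.mem_range ht) (hv'.mem_range ht) ih

theorem influences_doInt_le (dom : Finset (K.Endo × K.World))
    (val : K.Endo × K.World → K.Val) : (K.doInt dom val).Influences ≤ K.Influences := by
  rintro p _ ⟨X, w, rfl, g, g', hg, hg', hgg', hne⟩
  refine ⟨X, w, rfl, g, g', hg, hg', hgg', fun heq => hne ?_⟩
  simp only [doInt]
  split_ifs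
  · rfl
  · exact heq

theorem Recursive.doInt (hK : K.Recursive) (dom : Finset (K.Endo × K.World))
    (val : K.Endo × K.World → K.Val) : (K.doInt dom val).Recursive := fun p hp =>
  hK p (Relation.TransGen.mono (influences_doInt_le dom val) _ _ hp)

theorem Recursive.satI_iff (hK : K.Recursive) (ht : K.ValidContext t)
    {dom : Finset (K.Endo × K.World)} {val : K.Endo × K.World → K.Val}
    {v : ((K.Exo ⊕ K.Endo) × K.World) → K.Val} (hv : (K.doInt dom val).Solves t v)
    {w : K.World} {α : Event K.Endo K.World K.Val} :
    K.SatI t dom val w α ↔ (K.doInt dom val).SatE v w α := by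
  have ht' : (K.doInt dom val).ValidContext t := ht
  have hwf := (hK.doInt dom val).wellFounded_influences
  exact ⟨fun h => h v hv, fun h v' hv' => hv.eq_of_wellFounded ht' hwf hv' ▸ h⟩

theorem Recursive.satI_dia_iff (hK : K.Recursive) (ht : K.ValidContext t)
    (dom : Finset (K.Endo × K.World)) (val : K.Endo × K.World → K.Val) (w : K.World)
    (α : Event K.Endo K.World K.Val) :
    K.SatI t dom val w α.dia ↔ ∃ w', K.Rel w w' ∧ K.SatI t dom val w' α := by
  have ht' : (K.doInt dom val).ValidContext t := ht
  have hv := solves_solution ht' (hK.doInt dom val).wellFounded_influences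
  simp only [hK.satI_iff ht hv, Event.dia, SatE, not_forall, not_not, exists_prop]
  rfl

end CKM

theorem dia_axiom_valid_general (K : CKM) (hK : K.Recursive)
    (t : K.Exo → K.World → K.Val) (ht : K.ValidContext t) (w : K.World)
    (dom : Finset (K.Endo × K.World)) (val : K.Endo × K.World → K.Val)
    (α : Event K.Endo K.World K.Val) :
    K.Sat t w (.interv dom val α.dia) ↔ K.Sat t w (Formula.dia (.interv dom val α)) := by
  simp only [CKM.Sat, CKM.SatF, Formula.dia, hK.satI_dia_iff ht, not_forall, not_not,
    exists_prop]

/-- Validity of the ◇-axiom: for every recursive causal Kripke setting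
`(K,t)`, every world `w`, every (possibly empty) intervention `Y ← y` with
`Y ⊆ V × W` (whose prescribed values lie in the corresponding ranges), and every formula
`α` of the modal causal language `L_M` (an event, so that `[Y←y]◇α` is well formed),
`(K,t,w) ⊩ [Y←y]◇α` if and only if `(K,t,w) ⊩ ◇[Y←y]α`. -/
theorem dia_axiom_valid (K : CKM) (hK : K.Recursive)
    (t : K.Exo → K.World → K.Val) (ht : K.ValidContext t) (w : K.World)
    (dom : Finset (K.Endo × K.World)) (val : K.Endo × K.World → K.Val)
    (hval : ∀ p ∈ dom, val p ∈ K.range (Sum.inr p.1) p.2)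
    (α : Event K.Endo K.World K.Val) :
    K.Sat t w (.interv dom val α.dia) ↔ K.Sat t w (Formula.dia (.interv dom val α)) :=
  dia_axiom_valid_general K hK t ht w dom val α
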